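/- arXiv:2312.06533 — 2 statements merged into one kernel-verified Lean document; each statement's English description precedes it below -/
import Mathlib

section
/- Let F : [0,∞) → ℝ be nondecreasing with Laplace transform f(s) = ∫_0^∞ e^{-st}F(t)dt existing for all s > 0. If F(t) ~ (C/Γ(α+1))·t^α as t → ∞ for some α ≥ 0 and C > 0, then s·f(s) ~ C/s^α as s → 0⁺. -/
open Filter MeasureTheory Real Set Topology

/-! After the substitution `u = s t`, `s^α · s f(s) = ∫_0^∞ e^{-u} s^α F(u/s) du`. For fixed `u`
the integrand tends to `e^{-u} u^α L` as `s → 0⁺`, where `L = C/Γ(α+1)` is the limit of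
`F t / t^α`, and the limit integrates to `Γ(α+1) L = C`. Monotonicity bounds `F` on compact
intervals, so together with `F t = O(t^α)` it gives the dominating function
`e^{-u} (M + K u^α)` for `s ≤ 1`. -/

lemma mul_integral_exp_neg_mul_Ioi (F : ℝ → ℝ) {s : ℝ} (hs : 0 < s) :
    s * ∫ t in Ioi 0, exp (-s * t) * F t = ∫ u in Ioi 0, exp (-u) * F (u / s) := by
  have h := integral_comp_mul_left_Ioi (fun u => exp (-u) * F (u / s)) 0 hs
  simp only [mul_zero, smul_eq_mul, mul_div_cancel_left₀ _ hs.ne'] at h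
  simp only [neg_mul, h, ← mul_assoc, mul_inv_cancel₀ hs.ne', one_mul]

lemma exists_le_mul_rpow_of_tendsto_div_rpow {F : ℝ → ℝ} {α L : ℝ}
    (hF : Tendsto (fun t => F t / t ^ α) atTop (𝓝 L)) :
    ∃ T, 0 ≤ T ∧ ∀ t, T ≤ t → F t ≤ (|L| + 1) * t ^ α := by
  have hev : ∀ᶠ t in atTop, F t / t ^ α < |L| + 1 ∧ 0 < t :=
    (hF.eventually (gt_mem_nhds (by linarith [le_abs_self L]))).and (eventually_gt_atTop 0)
  obtain ⟨T, hT⟩ := eventually_atTop.mp hev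
  refine ⟨max T 0, le_max_right _ _, fun t ht => ?_⟩
  obtain ⟨hlt, htpos⟩ := hT t (le_of_max_le_left ht)
  exact ((div_lt_iff₀ (rpow_pos_of_pos htpos α)).mp hlt).le

lemma MonotoneOn.abs_le_add_mul_rpow {F : ℝ → ℝ} (hF : MonotoneOn F (Ici 0)) {K T α : ℝ}
    (hK : 0 ≤ K) (hT : 0 ≤ T) (hle : ∀ t, T ≤ t → F t ≤ K * t ^ α) {t : ℝ} (ht : 0 ≤ t) :
    |F t| ≤ |F 0| + |F T| + K * t ^ α := by
  have h0 : F 0 ≤ F t := hF self_mem_Ici ht ht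
  have hKt : 0 ≤ K * t ^ α := mul_nonneg hK (rpow_nonneg ht α)
  rw [abs_le]
  have hF0 := neg_abs_le (F 0)
  have hFT := le_abs_self (F T)
  rcases le_total T t with hTt | htT
  · have := hle t hTt
    constructor <;> linarith [abs_nonneg (F 0), abs_nonneg (F T)]
  · have := hF ht hT htT
    constructor <;> linarith [abs_nonneg (F 0), abs_nonneg (F T)]

lemma tendsto_rpow_mul_comp_div {F : ℝ → ℝ} {α L u : ℝ} (hu : 0 < u)
    (hF : Tendsto (fun t => F t / t ^ α) atTop (𝓝 L)) :
    Tendsto (fun s => s ^ α * F (u / s)) (𝓝[>] 0) (𝓝 (u ^ α * L)) := by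
  have hdiv : Tendsto (fun s : ℝ => u / s) (𝓝[>] 0) atTop := by
    simpa [div_eq_mul_inv] using tendsto_inv_nhdsGT_zero.const_mul_atTop hu
  refine ((hF.comp hdiv).const_mul (u ^ α)).congr' ?_
  filter_upwards [self_mem_nhdsWithin] with s (hs : 0 < s)
  have hsα : s ^ α ≠ 0 := (rpow_pos_of_pos hs α).ne'
  have huα : u ^ α ≠ 0 := (rpow_pos_of_pos hu α).ne'
  rw [Function.comp_apply, div_rpow hu.le hs.le]
  field_simp

theorem MonotoneOn.tendsto_integral_exp_neg_mul_rpow_mul_comp_div {F : ℝ → ℝ}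
    (hmono : MonotoneOn F (Ici 0)) {α L : ℝ} (hα : 0 ≤ α)
    (hF : Tendsto (fun t => F t / t ^ α) atTop (𝓝 L)) :
    Tendsto (fun s => ∫ u in Ioi 0, exp (-u) * (s ^ α * F (u / s))) (𝓝[>] 0)
      (𝓝 (Gamma (α + 1) * L)) := by
  obtain ⟨T, hT, hle⟩ := exists_le_mul_rpow_of_tendsto_div_rpow hF
  set M := |F 0| + |F T|
  set K := |L| + 1
  have hK : 0 ≤ K := by positivity
  have hlimit : ∫ u in Ioi 0, exp (-u) * (u ^ α * L) = Gamma (α + 1) * L := by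
    rw [Gamma_eq_integral (by linarith), add_sub_cancel_right, ← integral_mul_const]
    simp_rw [mul_assoc]
  rw [← hlimit]
  refine tendsto_integral_filter_of_dominated_convergence (fun u => exp (-u) * (M + K * u ^ α))
    ?_ ?_ ?_ ?_
  · filter_upwards [self_mem_nhdsWithin] with s (hs : 0 < s)
    have hcomp : MonotoneOn (fun u => F (u / s)) (Ioi 0) := fun x hx y hy hxy =>
      hmono (div_nonneg (le_of_lt hx) hs.le) (div_nonneg (le_of_lt hy) hs.le) (by gcongr)
    have hmeas := aemeasurable_restrict_of_monotoneOn (μ := volume) measurableSet_Ioi hcomp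
    exact ((measurable_exp.comp measurable_neg).aemeasurable.mul
      (aemeasurable_const.mul hmeas)).aestronglyMeasurable
  · filter_upwards [Ioc_mem_nhdsGT one_pos] with s ⟨hs, hs1⟩
    filter_upwards [ae_restrict_mem measurableSet_Ioi] with u (hu : 0 < u)
    have hbound := hmono.abs_le_add_mul_rpow hK hT hle (div_pos hu hs).le
    have hsα : 0 < s ^ α := rpow_pos_of_pos hs α
    have hM : 0 ≤ M := by positivity
    rw [norm_mul, norm_mul, norm_of_nonneg (exp_pos _).le, norm_of_nonneg hsα.le,
      Real.norm_eq_abs]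
    gcongr
    calc s ^ α * |F (u / s)| ≤ s ^ α * (M + K * (u / s) ^ α) := by gcongr
      _ = s ^ α * M + K * u ^ α := by
        rw [div_rpow hu.le hs.le]
        field_simp
      _ ≤ M + K * u ^ α := by
        gcongr
        exact mul_le_of_le_one_left hM (rpow_le_one hs.le hs1 hα)
  · have hexp : IntegrableOn (fun u : ℝ => exp (-u)) (Ioi 0) := by
      simpa using exp_neg_integrableOn_Ioi 0 one_pos
    have hgamma : IntegrableOn (fun u : ℝ => exp (-u) * u ^ α) (Ioi 0) := by
      simpa using GammaIntegral_convergent (by linarith : 0 < α + 1)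
    refine ((hexp.mul_const M).add (hgamma.const_mul K)).congr (ae_of_all _ fun u => ?_)
    simp only [Pi.add_apply]
    ring
  · filter_upwards [ae_restrict_mem measurableSet_Ioi] with u (hu : 0 < u)
    exact (tendsto_rpow_mul_comp_div hu hF).const_mul _

theorem MonotoneOn.tendsto_rpow_mul_mul_integral_exp_neg_mul {F : ℝ → ℝ}
    (hmono : MonotoneOn F (Ici 0)) {α L : ℝ} (hα : 0 ≤ α)
    (hF : Tendsto (fun t => F t / t ^ α) atTop (𝓝 L)) :
    Tendsto (fun s => s ^ α * (s * ∫ t in Ioi 0, exp (-s * t) * F t)) (𝓝[>] 0)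
      (𝓝 (Gamma (α + 1) * L)) := by
  refine (hmono.tendsto_integral_exp_neg_mul_rpow_mul_comp_div hα hF).congr' ?_
  filter_upwards [self_mem_nhdsWithin] with s (hs : 0 < s)
  rw [mul_integral_exp_neg_mul_Ioi F hs, ← integral_const_mul]
  congr with u
  ring

theorem abelian_laplace_transform_general (F : ℝ → ℝ) (hmono : MonotoneOn F (Set.Ici 0))
    (α C : ℝ) (hα : 0 ≤ α) (hC : 0 < C)
    (hF : Tendsto (fun t : ℝ => F t / (C / Real.Gamma (α + 1) * t ^ α))
      atTop (nhds 1)) :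
    Tendsto (fun s : ℝ =>
        (s * ∫ t in Set.Ioi (0 : ℝ), Real.exp (-s * t) * F t) / (C / s ^ α))
      (nhdsWithin 0 (Set.Ioi 0)) (nhds 1) := by
  have hΓ : Gamma (α + 1) ≠ 0 := (Gamma_pos_of_pos (by linarith)).ne'
  have hratio : Tendsto (fun t => F t / t ^ α) atTop (𝓝 (C / Gamma (α + 1))) := by
    refine (mul_one (C / Gamma (α + 1)) ▸ hF.const_mul (C / Gamma (α + 1))).congr' ?_
    filter_upwards [eventually_gt_atTop 0] with t ht
    have htα : t ^ α ≠ 0 := (rpow_pos_of_pos ht α).ne'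
    field_simp
  have hlim := (hmono.tendsto_rpow_mul_mul_integral_exp_neg_mul hα hratio).div_const C
  rw [mul_div_cancel₀ _ hΓ, div_self hC.ne'] at hlim
  refine hlim.congr' ?_
  filter_upwards [self_mem_nhdsWithin] with s (hs : 0 < s)
  have hsα : s ^ α ≠ 0 := (rpow_pos_of_pos hs α).ne'
  field_simp

/-- Abelian direction of the Hardy–Littlewood–Karamata theorem: if `F` is
nondecreasing with Laplace transform `f(s) = ∫_0^∞ e^{-st} F(t) dt` existing
for all `s > 0`, and `F(t) ~ (C/Γ(α+1))·t^α` as `t → ∞`, then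
`s·f(s) ~ C/s^α` as `s → 0⁺`. -/
theorem abelian_laplace_transform (F : ℝ → ℝ) (hmono : MonotoneOn F (Set.Ici 0))
    (hint : ∀ s : ℝ, 0 < s →
      IntegrableOn (fun t => Real.exp (-s * t) * F t) (Set.Ioi 0))
    (α C : ℝ) (hα : 0 ≤ α) (hC : 0 < C)
    (hF : Tendsto (fun t : ℝ => F t / (C / Real.Gamma (α + 1) * t ^ α))
      atTop (nhds 1)) :
    Tendsto (fun s : ℝ =>
        (s * ∫ t in Set.Ioi (0 : ℝ), Real.exp (-s * t) * F t) / (C / s ^ α))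
      (nhdsWithin 0 (Set.Ioi 0)) (nhds 1) :=
  abelian_laplace_transform_general F hmono α C hα hC hF
end

section
/- Let V = ℝ^{n+1} and let H_k ⊂ R[V]_k be the space of homogeneous harmonic polynomials of degree k. Then for all k ≥ 2, R[V]_k = H_k ⊕ r²·R[V]_{k-2}, where r² = x_0² + ⋯ + x_n². -/
/-!
For the Fischer form `⟨f, g⟩ = ∑ₘ m! fₘ gₘ`, multiplication by `xᵢ` is adjoint to `∂ᵢ`, so
multiplication by `r²` is adjoint to `Δ`. A harmonic `r² q` thus satisfies
`⟨r² q, r² q⟩ = ⟨q, Δ (r² q)⟩ = 0`, so it vanishes. In particular `Δ ∘ r²` is injective on the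
finite-dimensional space `R[V]_{k-2}`, hence surjective; writing `Δ f = Δ (r² q)` for `f ∈ R[V]_k`
splits `f = (f - r² q) + r² q`.
-/

open MvPolynomial Nat

theorem Submodule.eq_inf_ker_sup_map_of_disjoint {K M N : Type*} [DivisionRing K]
    [AddCommGroup M] [Module K M] [AddCommGroup N] [Module K N]
    {P : Submodule K M} {Q : Submodule K N} [FiniteDimensional K Q]
    {L : M →ₗ[K] N} {T : N →ₗ[K] M} (hL : ∀ x ∈ P, L x ∈ Q) (hT : ∀ y ∈ Q, T y ∈ P)
    (hT_inj : Function.Injective T) (h : Disjoint (P ⊓ LinearMap.ker L) (Q.map T)) :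
    P = P ⊓ LinearMap.ker L ⊔ Q.map T := by
  refine le_antisymm (fun x hx => ?_) (sup_le inf_le_left (Submodule.map_le_iff_le_comap.2 hT))
  have hLT_inj : Function.Injective (L.restrict hL ∘ₗ T.restrict hT) := by
    refine (injective_iff_map_eq_zero _).2 fun y hy => Subtype.ext (hT_inj ?_)
    have hLTy : L (T y) = 0 := congrArg Subtype.val hy
    rw [Submodule.disjoint_def.1 h _ ⟨hT y y.2, hLTy⟩ ⟨y, y.2, rfl⟩, Submodule.coe_zero, map_zero]
  obtain ⟨y, hy⟩ := LinearMap.injective_iff_surjective.1 hLT_inj ⟨L x, hL x hx⟩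
  have hLTy : L (T y) = L x := congrArg Subtype.val hy
  rw [← sub_add_cancel x (T y)]
  exact Submodule.add_mem_sup ⟨sub_mem hx (hT y y.2), by simp [hLTy]⟩ ⟨y, y.2, rfl⟩

namespace MvPolynomial

variable {σ R : Type*}

theorem prod_factorial_add_single [CommSemiring R] (m : σ →₀ ℕ) (i : σ) :
    ((m + Finsupp.single i 1).prod fun _ k => (k ! : R)) =
      (m i + 1) * m.prod fun _ k => (k ! : R) := by
  have hsplit : ∀ m : σ →₀ ℕ, (m.prod fun _ k => (k ! : R)) =
      (m i)! * (m.erase i).prod fun _ k => (k ! : R) :=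
    fun m => (Finsupp.mul_prod_erase' m i _ fun _ => by simp).symm
  rw [hsplit, hsplit m, Finsupp.erase_add, Finsupp.erase_single, add_zero, Finsupp.add_apply,
    Finsupp.single_eq_same, factorial_succ]
  push_cast
  ring

/-- `⟨f, g⟩ = ∑ₘ m! fₘ gₘ` with `m! = ∏ᵢ (mᵢ)!`, i.e. the constant term of `f(∂) g`. -/
noncomputable def fischerForm (σ R : Type*) [CommSemiring R] :
    LinearMap.BilinForm R (MvPolynomial σ R) :=
  Finsupp.linearCombination R (fun m : σ →₀ ℕ => (m.prod fun _ k => (k ! : R)) • lcoeff R m) ∘ₗ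
    (AddMonoidAlgebra.coeffLinearEquiv R).toLinearMap

section CommSemiring

variable [CommSemiring R]

theorem fischerForm_apply (f g : MvPolynomial σ R) :
    fischerForm σ R f g =
      ∑ m ∈ f.support, coeff m f * coeff m g * m.prod fun _ k => (k ! : R) := by
  simp only [fischerForm, LinearMap.coe_comp, Function.comp_apply,
    Finsupp.linearCombination_apply, Finsupp.sum, LinearMap.sum_apply, LinearMap.smul_apply,
    lcoeff_apply, smul_eq_mul]
  refine Finset.sum_congr rfl fun m _ => ?_
  change coeff m f * (_ * coeff m g) = _
  ring

theorem fischerForm_monomial_left (s : σ →₀ ℕ) (a : R) (g : MvPolynomial σ R) :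
    fischerForm σ R (monomial s a) g = a * coeff s g * s.prod fun _ k => (k ! : R) := by
  change Finsupp.linearCombination R
    (fun m : σ →₀ ℕ => (m.prod fun _ k => (k ! : R)) • lcoeff R m) (Finsupp.single s a) g = _
  rw [Finsupp.linearCombination_single]
  simp only [LinearMap.smul_apply, lcoeff_apply, smul_eq_mul]
  ring

theorem fischerForm_X_mul_left (i : σ) (p g : MvPolynomial σ R) :
    fischerForm σ R (X i * p) g = fischerForm σ R p (pderiv i g) := by
  induction p using MvPolynomial.induction_on' with
  | add p q hp hq => rw [mul_add, map_add, map_add, LinearMap.add_apply, LinearMap.add_apply, hp, hq]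
  | monomial m a =>
    rw [mul_comm, ← pow_one (X i), ← monomial_add_single, fischerForm_monomial_left,
      fischerForm_monomial_left, coeff_pderiv, prod_factorial_add_single]
    ring

theorem fischerForm_sum_X_sq_mul_left [Fintype σ] (q f : MvPolynomial σ R) :
    fischerForm σ R ((∑ i, X i ^ 2) * q) f = fischerForm σ R q (∑ i, pderiv i (pderiv i f)) := by
  simp only [Finset.sum_mul, map_sum, LinearMap.sum_apply, sq, mul_assoc, fischerForm_X_mul_left]

end CommSemiring

theorem fischerForm_self_pos [CommRing R] [LinearOrder R] [IsStrictOrderedRing R]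
    {f : MvPolynomial σ R} (hf : f ≠ 0) : 0 < fischerForm σ R f f := by
  have hweight (m : σ →₀ ℕ) : 0 < m.prod fun _ k => (k ! : R) :=
    Finset.prod_pos fun _ _ => Nat.cast_pos.2 (factorial_pos _)
  rw [fischerForm_apply]
  exact Finset.sum_pos (fun m hm => mul_pos (mul_self_pos.2 (mem_support_iff.1 hm)) (hweight m))
    (support_nonempty.2 hf)

theorem isHomogeneous_sum_X_sq [CommSemiring R] [Fintype σ] :
    (∑ i : σ, X i ^ 2 : MvPolynomial σ R).IsHomogeneous 2 :=
  IsHomogeneous.sum _ _ _ fun i _ => (isHomogeneous_X R i).pow 2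

theorem sum_X_sq_ne_zero [CommSemiring R] [CharZero R] [Fintype σ] [Nonempty σ] :
    (∑ i : σ, X i ^ 2 : MvPolynomial σ R) ≠ 0 := fun h => by
  simpa using congrArg (eval fun _ => (1 : R)) h

end MvPolynomial

/-- The polynomial Laplacian `Δ = ∑ i ∂²/∂x_i²` on `ℝ[x_0,…,x_n]`. -/
noncomputable def polyLaplacian (n : ℕ) :
    MvPolynomial (Fin (n + 1)) ℝ →ₗ[ℝ] MvPolynomial (Fin (n + 1)) ℝ :=
  ∑ i, ((MvPolynomial.pderiv i).toLinearMap ∘ₗ (MvPolynomial.pderiv i).toLinearMap)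

theorem polyLaplacian_apply (n : ℕ) (f : MvPolynomial (Fin (n + 1)) ℝ) :
    polyLaplacian n f = ∑ i, pderiv i (pderiv i f) := by
  simp [polyLaplacian]

theorem MvPolynomial.IsHomogeneous.polyLaplacian {n k : ℕ} {f : MvPolynomial (Fin (n + 1)) ℝ}
    (hf : f.IsHomogeneous k) : (polyLaplacian n f).IsHomogeneous (k - 2) := by
  rw [polyLaplacian_apply]
  exact IsHomogeneous.sum _ _ _ fun i _ => by simpa [Nat.sub_sub] using hf.pderiv.pderiv (i := i)

theorem disjoint_ker_polyLaplacian_range_mulLeft (n : ℕ) :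
    Disjoint (LinearMap.ker (polyLaplacian n))
      (LinearMap.range (LinearMap.mulLeft ℝ (∑ i, X i ^ 2))) := by
  refine Submodule.disjoint_def.2 ?_
  rintro _ hker ⟨q, rfl⟩
  rw [LinearMap.mem_ker, LinearMap.mulLeft_apply] at hker
  by_contra hne
  have hpos := fischerForm_self_pos hne
  rw [LinearMap.mulLeft_apply, fischerForm_sum_X_sq_mul_left, ← polyLaplacian_apply, hker,
    map_zero] at hpos
  exact hpos.false

/-- For `k ≥ 2`, the space of homogeneous polynomials of degree `k` on
`ℝ^{n+1}` decomposes as the direct sum of the harmonic homogeneous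
polynomials of degree `k` and `r²·R[V]_{k-2}`. -/
theorem harmonic_decomposition (n k : ℕ) (hk : 2 ≤ k) :
    MvPolynomial.homogeneousSubmodule (Fin (n + 1)) ℝ k =
        (MvPolynomial.homogeneousSubmodule (Fin (n + 1)) ℝ k ⊓
          LinearMap.ker (polyLaplacian n)) ⊔
        Submodule.map
          (LinearMap.mulLeft ℝ (∑ i, (MvPolynomial.X i) ^ 2))
          (MvPolynomial.homogeneousSubmodule (Fin (n + 1)) ℝ (k - 2)) ∧
      Disjoint
        (MvPolynomial.homogeneousSubmodule (Fin (n + 1)) ℝ k ⊓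
          LinearMap.ker (polyLaplacian n))
        (Submodule.map
          (LinearMap.mulLeft ℝ (∑ i, (MvPolynomial.X i) ^ 2))
          (MvPolynomial.homogeneousSubmodule (Fin (n + 1)) ℝ (k - 2))) := by
  set P := homogeneousSubmodule (Fin (n + 1)) ℝ
  set mulR := LinearMap.mulLeft ℝ (∑ i : Fin (n + 1), X i ^ 2 : MvPolynomial _ ℝ)
  have hΔ (f) (hf : f ∈ P k) : polyLaplacian n f ∈ P (k - 2) := IsHomogeneous.polyLaplacian hf
  have hmulR (q) (hq : q ∈ P (k - 2)) : mulR q ∈ P k := by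
    simpa [P, mulR, show 2 + (k - 2) = k by omega] using isHomogeneous_sum_X_sq.mul hq
  have hdisj : Disjoint (P k ⊓ LinearMap.ker (polyLaplacian n)) ((P (k - 2)).map mulR) :=
    (disjoint_ker_polyLaplacian_range_mulLeft n).mono inf_le_right LinearMap.map_le_range
  have : FiniteDimensional ℝ (P (k - 2)) := Module.Finite.iff_fg.2 (homogeneousSubmodule_fg _ _ _)
  exact ⟨Submodule.eq_inf_ker_sup_map_of_disjoint hΔ hmulR
    (mul_right_injective₀ sum_X_sq_ne_zero) hdisj, hdisj⟩
end
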